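/- arXiv:1907.09186 — 7 statements merged into one kernel-verified Lean document; each statement's English description precedes it below -/
import Mathlib

section
/- Let (f,g) ∈ 𝒞₁(I) and suppose that g' is nowhere zero. If x < y in I and f'/g' is strictly increasing, then for every z ∈ I with z < x, the inequality (f(x)−f(z))/(g(x)−g(z)) < (f(y)−f(z))/(g(y)−g(z)) holds; consequently C_{f,g}(x,z) < C_{f,g}(y,z). -/
/-!
By the Cauchy mean value theorem each difference quotient `(f b - f a) / (g b - g a)` with
`a < b` equals `f'/g'` at some point of `(a, b)`. Hence the quotient over `[z, x]` is smaller
than the quotient over `[x, y]`, and the quotient over `[z, y]`, a mediant of these two (the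
differences of `g` have one sign because `g` is strictly monotone by Darboux's theorem), lies
strictly above the first. The Cauchy means are the mean-value points themselves, and
`f'/g'` is strictly increasing, so they compare in the same way.
-/

/-- The two-variable Cauchy mean generated by `f` and `g` on `I`. -/
noncomputable def cauchyMean (I : Set ℝ) (f g : ℝ → ℝ) (x y : ℝ) : ℝ :=
  if x = y then x
  else Function.invFunOn (fun t => deriv f t / deriv g t) I ((f x - f y) / (g x - g y))

open Set

theorem div_lt_add_div_add {A B C D : ℝ} (hBD : 0 < B * D) (h : A / B < C / D) :
    A / B < (A + C) / (B + D) := by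
  wlog hB : 0 < B generalizing A B C D
  · have hB' : B < 0 := (not_lt.1 hB).lt_of_ne (left_ne_zero_of_mul hBD.ne')
    have := this (A := -A) (C := -C) (by rwa [neg_mul_neg]) (by rwa [neg_div_neg_eq, neg_div_neg_eq])
      (neg_pos.2 hB')
    rwa [← neg_add, ← neg_add, neg_div_neg_eq, neg_div_neg_eq] at this
  have hD : 0 < D := pos_of_mul_pos_right hBD hB.le
  rw [div_lt_div_iff₀ hB hD] at h
  rw [div_lt_div_iff₀ hB (add_pos hB hD)]
  nlinarith

/-- `g' ≠ 0` rules out `g a = g b`, by Rolle's theorem. -/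
theorem exists_mem_Ioo_div_sub_eq_deriv_div {f g : ℝ → ℝ} {a b : ℝ} (hab : a < b)
    (hfc : ContinuousOn f (Icc a b)) (hfd : DifferentiableOn ℝ f (Ioo a b))
    (hgc : ContinuousOn g (Icc a b)) (hgd : DifferentiableOn ℝ g (Ioo a b))
    (hg' : ∀ c ∈ Ioo a b, deriv g c ≠ 0) :
    ∃ c ∈ Ioo a b, (f b - f a) / (g b - g a) = deriv f c / deriv g c := by
  have hgab : g b - g a ≠ 0 := fun h => by
    obtain ⟨c, hc, hc0⟩ := exists_deriv_eq_zero hab hgc (sub_eq_zero.mp h).symm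
    exact hg' c hc hc0
  obtain ⟨c, hc, hcc⟩ := exists_ratio_deriv_eq_ratio_slope f hab hfc hfd g hgc hgd
  exact ⟨c, hc, by rw [div_eq_div_iff hgab (hg' c hc)]; linarith⟩

theorem cauchyMean_eq_of_div_sub_eq_deriv_div {I : Set ℝ} {f g : ℝ → ℝ}
    (hinj : InjOn (fun t => deriv f t / deriv g t) I) {x y c : ℝ} (hxy : x ≠ y) (hc : c ∈ I)
    (h : (f x - f y) / (g x - g y) = deriv f c / deriv g c) : cauchyMean I f g x y = c := by
  rw [cauchyMean, if_neg hxy, h]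
  exact hinj.leftInvOn_invFunOn hc

section OpenInterval

variable {I : Set ℝ} (hI : IsOpen I) (hIc : I.OrdConnected) {g : ℝ → ℝ}
  (hg : DifferentiableOn ℝ g I) (hg' : ∀ x ∈ I, deriv g x ≠ 0)
include hI hIc hg hg'

theorem strictMonoOn_or_strictAntiOn_of_deriv_ne_zero : StrictMonoOn g I ∨ StrictAntiOn g I := by
  have hderiv : ∀ x ∈ I, HasDerivWithinAt g (deriv g x) I x := fun x hx =>
    (hg.differentiableAt (hI.mem_nhds hx)).hasDerivAt.hasDerivWithinAt
  rcases hasDerivWithinAt_forall_lt_or_forall_gt_of_forall_ne hIc.convex hderiv hg'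
    with hneg | hpos
  · exact Or.inr (strictAntiOn_of_deriv_neg hIc.convex hg.continuousOn
      fun x hx => hneg x (interior_subset hx))
  · exact Or.inl (strictMonoOn_of_deriv_pos hIc.convex hg.continuousOn
      fun x hx => hpos x (interior_subset hx))

theorem sub_mul_sub_pos_of_deriv_ne_zero {x y z : ℝ} (hx : x ∈ I) (hy : y ∈ I) (hz : z ∈ I)
    (hzx : z < x) (hxy : x < y) : 0 < (g x - g z) * (g y - g x) := by
  rcases strictMonoOn_or_strictAntiOn_of_deriv_ne_zero hI hIc hg hg' with hmono | hanti
  · exact mul_pos (sub_pos.2 (hmono hz hx hzx)) (sub_pos.2 (hmono hx hy hxy))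
  · exact mul_pos_of_neg_of_neg (sub_neg.2 (hanti hz hx hzx)) (sub_neg.2 (hanti hx hy hxy))

omit hI in
theorem exists_mem_Ioo_div_sub_eq_deriv_div_of_mem {f : ℝ → ℝ} (hf : DifferentiableOn ℝ f I)
    {a b : ℝ} (ha : a ∈ I) (hb : b ∈ I) (hab : a < b) :
    ∃ c ∈ Ioo a b, (f b - f a) / (g b - g a) = deriv f c / deriv g c := by
  have hsub : Icc a b ⊆ I := hIc.out ha hb
  exact exists_mem_Ioo_div_sub_eq_deriv_div hab (hf.continuousOn.mono hsub)
    (hf.mono (Ioo_subset_Icc_self.trans hsub)) (hg.continuousOn.mono hsub)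
    (hg.mono (Ioo_subset_Icc_self.trans hsub)) fun c hc => hg' c (hsub (Ioo_subset_Icc_self hc))

end OpenInterval

theorem cauchyMean_strict_ineq_general
    (I : Set ℝ) (hI : IsOpen I) (hIc : I.OrdConnected)
    (f g : ℝ → ℝ)
    (hf : ContDiffOn ℝ 1 f I) (hg : ContDiffOn ℝ 1 g I)
    (hg' : ∀ x ∈ I, deriv g x ≠ 0)
    (hmono : StrictMonoOn (fun x => deriv f x / deriv g x) I)
    (x y : ℝ) (hx : x ∈ I) (hy : y ∈ I) (hxy : x < y) :
    ∀ z ∈ I, z < x →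
      (f x - f z) / (g x - g z) < (f y - f z) / (g y - g z) ∧
      cauchyMean I f g x z < cauchyMean I f g y z := by
  intro z hz hzx
  have hfd := hf.differentiableOn one_ne_zero
  have hgd := hg.differentiableOn one_ne_zero
  have hcI : ∀ {a b c}, a ∈ I → b ∈ I → c ∈ Ioo a b → c ∈ I := fun ha hb hc =>
    hIc.out ha hb (Ioo_subset_Icc_self hc)
  obtain ⟨c₁, hc₁, hzx_eq⟩ := exists_mem_Ioo_div_sub_eq_deriv_div_of_mem hIc hgd hg' hfd hz hx hzx
  obtain ⟨c₂, hc₂, hxy_eq⟩ := exists_mem_Ioo_div_sub_eq_deriv_div_of_mem hIc hgd hg' hfd hx hy hxy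
  obtain ⟨c₃, hc₃, hzy_eq⟩ :=
    exists_mem_Ioo_div_sub_eq_deriv_div_of_mem hIc hgd hg' hfd hz hy (hzx.trans hxy)
  have hzx_lt_xy : (f x - f z) / (g x - g z) < (f y - f x) / (g y - g x) := by
    rw [hzx_eq, hxy_eq]
    exact hmono (hcI hz hx hc₁) (hcI hx hy hc₂) (hc₁.2.trans hc₂.1)
  have hquot : (f x - f z) / (g x - g z) < (f y - f z) / (g y - g z) := by
    have := div_lt_add_div_add (sub_mul_sub_pos_of_deriv_ne_zero hI hIc hgd hg' hx hy hz hzx hxy)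
      hzx_lt_xy
    rwa [sub_add_sub_cancel', sub_add_sub_cancel'] at this
  refine ⟨hquot, ?_⟩
  rw [cauchyMean_eq_of_div_sub_eq_deriv_div hmono.injOn hzx.ne' (hcI hz hx hc₁) hzx_eq,
    cauchyMean_eq_of_div_sub_eq_deriv_div hmono.injOn (hzx.trans hxy).ne' (hcI hz hy hc₃) hzy_eq]
  rw [← hmono.lt_iff_lt (hcI hz hx hc₁) (hcI hz hy hc₃)]
  simpa only [← hzx_eq, ← hzy_eq] using hquot

/-- Monotonicity of the difference quotients of a 𝒞₁ pair with strictly increasing f'/g',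
and the resulting strict monotonicity of the Cauchy mean. -/
theorem cauchyMean_strict_ineq
    (I : Set ℝ) (hI : IsOpen I) (hIc : I.OrdConnected) (hne : I.Nonempty)
    (f g : ℝ → ℝ)
    (hf : ContDiffOn ℝ 1 f I) (hg : ContDiffOn ℝ 1 g I)
    (hg' : ∀ x ∈ I, deriv g x ≠ 0)
    (hmono : StrictMonoOn (fun x => deriv f x / deriv g x) I)
    (x y : ℝ) (hx : x ∈ I) (hy : y ∈ I) (hxy : x < y) :
    ∀ z ∈ I, z < x →
      (f x - f z) / (g x - g z) < (f y - f z) / (g y - g z) ∧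
      cauchyMean I f g x z < cauchyMean I f g y z :=
  cauchyMean_strict_ineq_general I hI hIc f g hf hg hg' hmono x y hx hy hxy
end

section
/- Suppose f, g : I → ℝ are continuous on an open interval I with g' existing and nowhere zero, f'/g' strictly monotone, and suppose there exist constants δ, ε, η ∈ ℝ with (δ, ε) ≠ (0,0) such that δf + εg + η = 0 on I. Then a contradiction follows; i.e., the range of (f,g) cannot be contained in a straight line. -/
/-- The range of a 𝒞₁(I) pair (f,g) cannot be contained in a straight line. -/
theorem range_not_in_line
    (I : Set ℝ) (hI : IsOpen I) (hIc : I.OrdConnected) (hne : I.Nonempty)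
    (f g : ℝ → ℝ)
    (hfc : ContinuousOn f I) (hgc : ContinuousOn g I)
    (hfd : DifferentiableOn ℝ f I) (hgd : DifferentiableOn ℝ g I)
    (hg' : ∀ x ∈ I, deriv g x ≠ 0)
    (hmono : StrictMonoOn (fun x => deriv f x / deriv g x) I ∨
             StrictAntiOn (fun x => deriv f x / deriv g x) I)
    (δ ε η : ℝ) (hde : (δ, ε) ≠ (0, 0))
    (hline : ∀ x ∈ I, δ * f x + ε * g x + η = 0) :
    False := by
  -- key: δ f' + ε g' = 0 on I
  have key : ∀ x ∈ I, δ * deriv f x + ε * deriv g x = 0 := by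
    intro x hx
    have hf : HasDerivAt f (deriv f x) x :=
      (hfd.differentiableAt (hI.mem_nhds hx)).hasDerivAt
    have hg : HasDerivAt g (deriv g x) x :=
      (hgd.differentiableAt (hI.mem_nhds hx)).hasDerivAt
    have h1 : HasDerivAt (fun y => δ * f y + ε * g y + η)
        (δ * deriv f x + ε * deriv g x) x :=
      ((hf.const_mul δ).add (hg.const_mul ε)).add_const η
    have h2 : HasDerivAt (fun y => δ * f y + ε * g y + η) 0 x := by
      have heq : (fun y => δ * f y + ε * g y + η) =ᶠ[nhds x] (fun _ => (0:ℝ)) := by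
        filter_upwards [hI.mem_nhds hx] with y hy using hline y hy
      exact (hasDerivAt_const x (0:ℝ)).congr_of_eventuallyEq heq
    have := h1.unique h2
    linarith
  obtain ⟨x₀, hx₀⟩ := hne
  -- δ ≠ 0
  have hδ : δ ≠ 0 := by
    intro h0
    have hε : ε ≠ 0 := by
      intro h1; exact hde (by simp [h0, h1])
    have := key x₀ hx₀
    rw [h0] at this
    simp at this
    rcases this with h | h
    · exact hε h
    · exact hg' x₀ hx₀ h
  -- ratio is constant on I
  have hconst : ∀ x ∈ I, deriv f x / deriv g x = -ε / δ := by
    intro x hx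
    have h := key x hx
    have hgx := hg' x hx
    field_simp
    linarith
  -- two points in I
  obtain ⟨r, hr, hball⟩ := Metric.isOpen_iff.mp hI x₀ hx₀
  have hy : x₀ + r / 2 ∈ I := by
    apply hball
    rw [Metric.mem_ball, Real.dist_eq]
    rw [abs_of_nonneg (by linarith : (0:ℝ) ≤ x₀ + r/2 - x₀)]
    linarith
  have hlt : x₀ < x₀ + r / 2 := by linarith
  rcases hmono with h | h
  · have := h hx₀ hy hlt
    simp only [hconst x₀ hx₀, hconst _ hy] at this
    exact lt_irrefl _ this
  · have := h hx₀ hy hlt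
    simp only [hconst x₀ hx₀, hconst _ hy] at this
    exact lt_irrefl _ this
end

section
/- Let (f,g) ∈ 𝒞₁(I), and suppose the range of (f,g) is contained in the zero set of a quadratic polynomial αx² + βxy + γy² + δx + εy + η with (α,β,γ) ≠ (0,0,0). Then this conic is nondegenerate: it is neither empty, nor a point, nor a line, nor a union of two lines. -/
/-!
The conic contains the curve `(f, g)`, so it is nonempty, and a point lies on a line, so it
suffices to show that the curve is not contained in a union of two lines. If it were,
continuity would give a nonempty open subset of `I` on which the curve lies in one line
`A x + B y + C = 0`. Differentiating, `A f' + B g' = 0` there, so `f' / g'` would be constant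
on that subset, contradicting strict monotonicity.
-/

open Set

theorem deriv_affine_comb_eq_zero {U : Set ℝ} (hU : IsOpen U) {f g : ℝ → ℝ}
    (hf : DifferentiableOn ℝ f U) (hg : DifferentiableOn ℝ g U) {A B C : ℝ}
    (hline : ∀ x ∈ U, A * f x + B * g x + C = 0) {x : ℝ} (hx : x ∈ U) :
    A * deriv f x + B * deriv g x = 0 := by
  have hderiv : HasDerivAt (fun y => A * f y + B * g y + C) (A * deriv f x + B * deriv g x) x :=
    (((hf.differentiableAt (hU.mem_nhds hx)).hasDerivAt.const_mul A).add
      ((hg.differentiableAt (hU.mem_nhds hx)).hasDerivAt.const_mul B)).add_const C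
  have hzero : (fun y => A * f y + B * g y + C) =ᶠ[nhds x] fun _ => 0 :=
    Filter.eventually_of_mem (hU.mem_nhds hx) hline
  rw [← hderiv.deriv, hzero.deriv_eq, deriv_const]

theorem not_forall_affine_comb_eq_zero_of_injOn {U : Set ℝ} (hU : IsOpen U) (hne : U.Nonempty)
    {f g : ℝ → ℝ} (hf : DifferentiableOn ℝ f U) (hg : DifferentiableOn ℝ g U)
    (hg' : ∀ x ∈ U, deriv g x ≠ 0) (hinj : InjOn (fun x => deriv f x / deriv g x) U)
    {A B C : ℝ} (hAB : (A, B) ≠ (0, 0)) :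
    ¬ ∀ x ∈ U, A * f x + B * g x + C = 0 := by
  intro hline
  have hratio : ∀ x ∈ U, A * (deriv f x / deriv g x) + B = 0 := fun x hx => by
    rw [mul_div_assoc', div_add' _ _ _ (hg' x hx), deriv_affine_comb_eq_zero hU hf hg hline hx,
      zero_div]
  obtain ⟨a, b, hab, hsub⟩ := hU.exists_Ioo_subset hne
  obtain ⟨x, hx, y, hy, hxy⟩ := (Ioo_infinite hab).nontrivial
  have hA : A = 0 := by
    have hdiff : A * (deriv f x / deriv g x - deriv f y / deriv g y) = 0 := by
      linear_combination hratio x (hsub hx) - hratio y (hsub hy)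
    exact (mul_eq_zero.mp hdiff).resolve_right
      (sub_ne_zero.mpr fun h => hxy (hinj (hsub hx) (hsub hy) h))
  have hB : B = 0 := by simpa [hA] using hratio x (hsub hx)
  exact hAB (by rw [hA, hB])

theorem exists_isOpen_forall_eq_zero_of_forall_or {X Y : Type*} [TopologicalSpace X]
    [TopologicalSpace Y] [T1Space Y] [Zero Y] {U : Set X} (hU : IsOpen U) (hne : U.Nonempty)
    {u v : X → Y} (hu : ContinuousOn u U) (huv : ∀ x ∈ U, u x = 0 ∨ v x = 0) :
    ∃ V ⊆ U, IsOpen V ∧ V.Nonempty ∧ ((∀ x ∈ V, u x = 0) ∨ ∀ x ∈ V, v x = 0) := by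
  by_cases hu0 : ∀ x ∈ U, u x = 0
  · exact ⟨U, subset_rfl, hU, hne, Or.inl hu0⟩
  obtain ⟨x, hxU, hx⟩ := not_forall₂.mp hu0
  refine ⟨U ∩ u ⁻¹' {0}ᶜ, inter_subset_left, hu.isOpen_inter_preimage hU isOpen_compl_singleton,
    ⟨x, hxU, hx⟩, Or.inr fun y hy => (huv y hy.1).resolve_left hy.2⟩

theorem conic_nondegenerate_general
    (I : Set ℝ) (hI : IsOpen I) (hne : I.Nonempty)
    (f g : ℝ → ℝ)
    (hf : ContDiffOn ℝ 1 f I) (hg : ContDiffOn ℝ 1 g I)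
    (hg' : ∀ x ∈ I, deriv g x ≠ 0)
    (hmono : StrictMonoOn (fun x => deriv f x / deriv g x) I ∨
             StrictAntiOn (fun x => deriv f x / deriv g x) I)
    (α β γ δ ε η : ℝ)
    (hconic : ∀ x ∈ I,
      α * f x ^ 2 + β * f x * g x + γ * g x ^ 2 + δ * f x + ε * g x + η = 0) :
    (({p : ℝ × ℝ |
        α * p.1 ^ 2 + β * p.1 * p.2 + γ * p.2 ^ 2 + δ * p.1 + ε * p.2 + η = 0} :
        Set (ℝ × ℝ)).Nonempty) ∧
    (¬ ∃ p₀ : ℝ × ℝ,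
      {p : ℝ × ℝ |
        α * p.1 ^ 2 + β * p.1 * p.2 + γ * p.2 ^ 2 + δ * p.1 + ε * p.2 + η = 0} ⊆ {p₀}) ∧
    (¬ ∃ A B C A' B' C' : ℝ, (A, B) ≠ (0, 0) ∧ (A', B') ≠ (0, 0) ∧
      {p : ℝ × ℝ |
        α * p.1 ^ 2 + β * p.1 * p.2 + γ * p.2 ^ 2 + δ * p.1 + ε * p.2 + η = 0} ⊆
      {p : ℝ × ℝ | A * p.1 + B * p.2 + C = 0} ∪
      {p : ℝ × ℝ | A' * p.1 + B' * p.2 + C' = 0}) := by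
  have hfd := hf.differentiableOn one_ne_zero
  have hgd := hg.differentiableOn one_ne_zero
  have hinj := hmono.elim StrictMonoOn.injOn StrictAntiOn.injOn
  have hfc := hf.continuousOn
  have hgc := hg.continuousOn
  have not_in_lines : ¬ ∃ A B C A' B' C' : ℝ, (A, B) ≠ (0, 0) ∧ (A', B') ≠ (0, 0) ∧
      {p : ℝ × ℝ |
        α * p.1 ^ 2 + β * p.1 * p.2 + γ * p.2 ^ 2 + δ * p.1 + ε * p.2 + η = 0} ⊆
      {p : ℝ × ℝ | A * p.1 + B * p.2 + C = 0} ∪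
      {p : ℝ × ℝ | A' * p.1 + B' * p.2 + C' = 0} := by
    rintro ⟨A, B, C, A', B', C', hAB, hAB', hsub⟩
    obtain ⟨V, hVI, hV, hVne, hline | hline⟩ := exists_isOpen_forall_eq_zero_of_forall_or hI hne
      (u := fun x => A * f x + B * g x + C) (v := fun x => A' * f x + B' * g x + C')
      (by fun_prop) (fun x hx => hsub (a := (f x, g x)) (hconic x hx))
    · exact not_forall_affine_comb_eq_zero_of_injOn hV hVne (hfd.mono hVI) (hgd.mono hVI)
        (fun x hx => hg' x (hVI hx)) (hinj.mono hVI) hAB hline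
    · exact not_forall_affine_comb_eq_zero_of_injOn hV hVne (hfd.mono hVI) (hgd.mono hVI)
        (fun x hx => hg' x (hVI hx)) (hinj.mono hVI) hAB' hline
  obtain ⟨x₀, hx₀⟩ := hne
  refine ⟨⟨(f x₀, g x₀), hconic x₀ hx₀⟩, ?_, not_in_lines⟩
  rintro ⟨p₀, hp₀⟩
  refine not_in_lines ⟨1, 0, -p₀.1, 1, 0, -p₀.1, by simp, by simp, fun p hp => Or.inl ?_⟩
  rw [mem_singleton_iff.mp (hp₀ hp)]
  simp

/-- If the range of a 𝒞₁(I) pair is contained in the zero set of a genuine quadratic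
polynomial, then this conic is nondegenerate: it is neither empty, nor a single point,
nor contained in the union of two straight lines (in particular not a line). -/
theorem conic_nondegenerate
    (I : Set ℝ) (hI : IsOpen I) (hIc : I.OrdConnected) (hne : I.Nonempty)
    (f g : ℝ → ℝ)
    (hf : ContDiffOn ℝ 1 f I) (hg : ContDiffOn ℝ 1 g I)
    (hg' : ∀ x ∈ I, deriv g x ≠ 0)
    (hmono : StrictMonoOn (fun x => deriv f x / deriv g x) I ∨
             StrictAntiOn (fun x => deriv f x / deriv g x) I)
    (α β γ δ ε η : ℝ) (habc : (α, β, γ) ≠ (0, 0, 0))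
    (hconic : ∀ x ∈ I,
      α * f x ^ 2 + β * f x * g x + γ * g x ^ 2 + δ * f x + ε * g x + η = 0) :
    (({p : ℝ × ℝ |
        α * p.1 ^ 2 + β * p.1 * p.2 + γ * p.2 ^ 2 + δ * p.1 + ε * p.2 + η = 0} :
        Set (ℝ × ℝ)).Nonempty) ∧
    (¬ ∃ p₀ : ℝ × ℝ,
      {p : ℝ × ℝ |
        α * p.1 ^ 2 + β * p.1 * p.2 + γ * p.2 ^ 2 + δ * p.1 + ε * p.2 + η = 0} ⊆ {p₀}) ∧
    (¬ ∃ A B C A' B' C' : ℝ, (A, B) ≠ (0, 0) ∧ (A', B') ≠ (0, 0) ∧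
      {p : ℝ × ℝ |
        α * p.1 ^ 2 + β * p.1 * p.2 + γ * p.2 ^ 2 + δ * p.1 + ε * p.2 + η = 0} ⊆
      {p : ℝ × ℝ | A * p.1 + B * p.2 + C = 0} ∪
      {p : ℝ × ℝ | A' * p.1 + B' * p.2 + C' = 0}) :=
  conic_nondegenerate_general I hI hne f g hf hg hg' hmono α β γ δ ε η hconic
end

section
/- Let (f,g) ∈ 𝒞₁(I). If there exists a differentiable h : I → ℝ with nonvanishing derivative and real constants a, b, c, d with ad ≠ bc such that f' = (−a·sin∘h + b·cos∘h)·h' and g' = (−c·sin∘h + d·cos∘h)·h', then the Cauchy mean C_{f,g} equals the quasiarithmetic mean A_h on I². -/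
/-- The two-variable quasiarithmetic mean generated by `h` on `I`. -/
noncomputable def quasiMean (I : Set ℝ) (h : ℝ → ℝ) (x y : ℝ) : ℝ :=
  Function.invFunOn h I ((h x + h y) / 2)

/-!
Up to additive constants, `f = a cos ∘ h + b sin ∘ h` and `g = c cos ∘ h + d sin ∘ h` on `I`.
With `m = (h x + h y) / 2`, the sum-to-product formulas give
`f x - f y = 2 sin ((h x - h y) / 2) · (-a sin m + b cos m)` and the analogous formula for `g`,
so `(f x - f y) / (g x - g y) = f' z / g' z` at the point `z` where `h z = m`, that is, at
`z = A_h(x, y)`.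
-/

open Real Set

lemma Convex.strictMonoOn_or_strictAntiOn_of_deriv_ne_zero {I : Set ℝ} (hIc : Convex ℝ I)
    (hI : IsOpen I) {φ : ℝ → ℝ} (hφ : DifferentiableOn ℝ φ I) (hφ' : ∀ x ∈ I, deriv φ x ≠ 0) :
    StrictMonoOn φ I ∨ StrictAntiOn φ I := by
  have hder : ∀ x ∈ I, HasDerivWithinAt φ (deriv φ x) I x := fun x hx =>
    (hφ.differentiableAt (hI.mem_nhds hx)).hasDerivAt.hasDerivWithinAt
  rcases hasDerivWithinAt_forall_lt_or_forall_gt_of_forall_ne hIc hder hφ' with hneg | hpos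
  · exact .inr <| strictAntiOn_of_deriv_neg hIc hφ.continuousOn fun x hx =>
      hneg x (interior_subset hx)
  · exact .inl <| strictMonoOn_of_deriv_pos hIc hφ.continuousOn fun x hx =>
      hpos x (interior_subset hx)

lemma Convex.injOn_of_deriv_ne_zero {I : Set ℝ} (hIc : Convex ℝ I) (hI : IsOpen I)
    {φ : ℝ → ℝ} (hφ : DifferentiableOn ℝ φ I) (hφ' : ∀ x ∈ I, deriv φ x ≠ 0) :
    InjOn φ I :=
  (hIc.strictMonoOn_or_strictAntiOn_of_deriv_ne_zero hI hφ hφ').elim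
    StrictMonoOn.injOn StrictAntiOn.injOn

lemma Set.OrdConnected.exists_eq_midpoint {I : Set ℝ} (hIc : I.OrdConnected) {h : ℝ → ℝ}
    (hh : ContinuousOn h I) {x y : ℝ} (hx : x ∈ I) (hy : y ∈ I) :
    ∃ z ∈ I, h z = (h x + h y) / 2 := by
  have hmid : (h x + h y) / 2 ∈ uIcc (h x) (h y) := by
    rcases le_total (h x) (h y) with hle | hle
    · exact mem_uIcc.2 (.inl ⟨by linarith, by linarith⟩)
    · exact mem_uIcc.2 (.inr ⟨by linarith, by linarith⟩)
  obtain ⟨z, hz, hzm⟩ := intermediate_value_uIcc (hh.mono (hIc.uIcc_subset hx hy)) hmid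
  exact ⟨z, hIc.uIcc_subset hx hy hz, hzm⟩

lemma mul_cos_add_mul_sin_sub_mul_cos_add_mul_sin (a b u v : ℝ) :
    (a * cos u + b * sin u) - (a * cos v + b * sin v) =
      2 * sin ((u - v) / 2) * (-a * sin ((u + v) / 2) + b * cos ((u + v) / 2)) := by
  linear_combination a * cos_sub_cos u v + b * sin_sub_sin u v

lemma HasDerivAt.mul_cos_add_mul_sin {h : ℝ → ℝ} {h' t : ℝ} (hh : HasDerivAt h h' t)
    (a b : ℝ) :
    HasDerivAt (fun s => a * Real.cos (h s) + b * Real.sin (h s))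
      ((-a * Real.sin (h t) + b * Real.cos (h t)) * h') t :=
  ((hh.cos.const_mul a).fun_add (hh.sin.const_mul b)).congr_deriv (by ring)

lemma sub_eq_of_deriv_eq_trig {I : Set ℝ} (hI : IsOpen I) (hIc : IsPreconnected I)
    {f h : ℝ → ℝ} (hf : DifferentiableOn ℝ f I) (hh : DifferentiableOn ℝ h I) {a b : ℝ}
    (hf' : ∀ x ∈ I, deriv f x = (-a * sin (h x) + b * cos (h x)) * deriv h x)
    {x y : ℝ} (hx : x ∈ I) (hy : y ∈ I) :
    f x - f y =
      2 * sin ((h x - h y) / 2) * (-a * sin ((h x + h y) / 2) + b * cos ((h x + h y) / 2)) := by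
  have hF : ∀ t ∈ I, HasDerivAt (fun s => a * cos (h s) + b * sin (h s)) (deriv f t) t :=
    fun t ht => hf' t ht ▸
      (hh.differentiableAt (hI.mem_nhds ht)).hasDerivAt.mul_cos_add_mul_sin a b
  obtain ⟨k, hk⟩ := hI.exists_eq_add_of_deriv_eq hIc hf
    (fun t ht => (hF t ht).differentiableAt.differentiableWithinAt) fun t ht => (hF t ht).deriv.symm
  rw [hk hx, hk hy, ← mul_cos_add_mul_sin_sub_mul_cos_add_mul_sin]
  ring

lemma cauchyMean_eq_of_ne {I : Set ℝ} {f g : ℝ → ℝ}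
    (hr : InjOn (fun t => deriv f t / deriv g t) I) {x y z : ℝ} (hxy : x ≠ y) (hz : z ∈ I)
    (hfg : (f x - f y) / (g x - g y) = deriv f z / deriv g z) :
    cauchyMean I f g x y = z := by
  rw [cauchyMean, if_neg hxy, hfg]
  exact hr.leftInvOn_invFunOn hz

lemma quasiMean_eq_of_injOn {I : Set ℝ} {h : ℝ → ℝ} (hh : InjOn h I) {x y z : ℝ} (hz : z ∈ I)
    (hzm : h z = (h x + h y) / 2) : quasiMean I h x y = z := by
  rw [quasiMean, ← hzm]
  exact hh.leftInvOn_invFunOn hz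

theorem cauchyMean_eq_quasiMean_of_trig_general
    (I : Set ℝ) (hI : IsOpen I) (hIc : I.OrdConnected)
    (f g : ℝ → ℝ)
    (hf : ContDiffOn ℝ 1 f I) (hg : ContDiffOn ℝ 1 g I)
    (hg' : ∀ x ∈ I, deriv g x ≠ 0)
    (hmono : StrictMonoOn (fun x => deriv f x / deriv g x) I ∨
             StrictAntiOn (fun x => deriv f x / deriv g x) I)
    (h : ℝ → ℝ) (hhd : DifferentiableOn ℝ h I) (hh' : ∀ x ∈ I, deriv h x ≠ 0)
    (a b c d : ℝ)
    (hf' : ∀ x ∈ I,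
      deriv f x = (-a * Real.sin (h x) + b * Real.cos (h x)) * deriv h x)
    (hg'eq : ∀ x ∈ I,
      deriv g x = (-c * Real.sin (h x) + d * Real.cos (h x)) * deriv h x) :
    ∀ x ∈ I, ∀ y ∈ I, cauchyMean I f g x y = quasiMean I h x y := by
  intro x hx y hy
  have hinjh : InjOn h I := hIc.convex.injOn_of_deriv_ne_zero hI hhd hh'
  obtain ⟨z, hzI, hz⟩ := hIc.exists_eq_midpoint hhd.continuousOn hx hy
  rw [quasiMean_eq_of_injOn hinjh hzI hz]
  by_cases hxy : x = y
  · subst hxy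
    rw [cauchyMean, if_pos rfl]
    exact hinjh hx hzI (by rw [hz]; ring)
  have hgd := hg.differentiableOn one_ne_zero
  have hgxy : g x - g y ≠ 0 :=
    sub_ne_zero.2 fun e => hxy (hIc.convex.injOn_of_deriv_ne_zero hI hgd hg' hx hy e)
  have hΔf := sub_eq_of_deriv_eq_trig hI hIc.isPreconnected (hf.differentiableOn one_ne_zero)
    hhd hf' hx hy
  have hΔg := sub_eq_of_deriv_eq_trig hI hIc.isPreconnected hgd hhd hg'eq hx hy
  have hs : 2 * sin ((h x - h y) / 2) ≠ 0 := fun e => hgxy (by rw [hΔg, e, zero_mul])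
  refine cauchyMean_eq_of_ne (hmono.elim StrictMonoOn.injOn StrictAntiOn.injOn) hxy hzI ?_
  rw [hΔf, hΔg, mul_div_mul_left _ _ hs, hf' z hzI, hg'eq z hzI,
    mul_div_mul_right _ _ (hh' z hzI), hz]

/-- If `(f', g') ∼ (h'·sin∘h, h'·cos∘h)` (trigonometric case, p = −1), then the Cauchy
mean `C_{f,g}` equals the quasiarithmetic mean `A_h` on I². -/
theorem cauchyMean_eq_quasiMean_of_trig
    (I : Set ℝ) (hI : IsOpen I) (hIc : I.OrdConnected) (hne : I.Nonempty)
    (f g : ℝ → ℝ)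
    (hf : ContDiffOn ℝ 1 f I) (hg : ContDiffOn ℝ 1 g I)
    (hg' : ∀ x ∈ I, deriv g x ≠ 0)
    (hmono : StrictMonoOn (fun x => deriv f x / deriv g x) I ∨
             StrictAntiOn (fun x => deriv f x / deriv g x) I)
    (h : ℝ → ℝ) (hhd : DifferentiableOn ℝ h I) (hh' : ∀ x ∈ I, deriv h x ≠ 0)
    (a b c d : ℝ) (habcd : a * d ≠ b * c)
    (hf' : ∀ x ∈ I,
      deriv f x = (-a * Real.sin (h x) + b * Real.cos (h x)) * deriv h x)
    (hg'eq : ∀ x ∈ I,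
      deriv g x = (-c * Real.sin (h x) + d * Real.cos (h x)) * deriv h x) :
    ∀ x ∈ I, ∀ y ∈ I, cauchyMean I f g x y = quasiMean I h x y :=
  cauchyMean_eq_quasiMean_of_trig_general I hI hIc f g hf hg hg' hmono h hhd hh' a b c d hf' hg'eq
end

section
/- Let (f,g) ∈ 𝒞₁(I) and suppose there exists a continuous strictly monotone h : I → ℝ with C_{f,g} = A_h on I². Then there exist real constants α, β, γ, δ, ε, η with (α, β, γ) ≠ (0,0,0) such that αf² + βfg + γg² + δf + εg + η = 0 identically on I; equivalently, the curve x ↦ (f(x), g(x)) lies on a conic section. -/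
open Set Filter Function Topology Asymptotics MeasureTheory

theorem IsOpen.exists_mem_lt_mem_lt {I : Set ℝ} (hI : IsOpen I) {y : ℝ} (hy : y ∈ I) :
    ∃ a ∈ I, ∃ b ∈ I, a < y ∧ y < b := by
  obtain ⟨ε, hε, hball⟩ := Metric.isOpen_iff.mp hI y hy
  refine ⟨y - ε / 2, hball ?_, y + ε / 2, hball ?_, by linarith, by linarith⟩ <;>
    simp [abs_of_pos, hε]

theorem ContinuousLinearMap.apply_prod_mk (F' : ℝ × ℝ →L[ℝ] ℝ) (a b : ℝ) :
    F' (a, b) = a * F' (1, 0) + b * F' (0, 1) := by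
  have : ((a, b) : ℝ × ℝ) = a • ((1 : ℝ), (0 : ℝ)) + b • ((0 : ℝ), (1 : ℝ)) := by simp
  rw [this, map_add, map_smul, map_smul, smul_eq_mul, smul_eq_mul]

theorem DifferentiableAt.hasDerivAt_implicit {F : ℝ × ℝ → ℝ} {Y : ℝ → ℝ} {x₀ y₀ a b : ℝ}
    (hF : DifferentiableAt ℝ F (x₀, y₀)) (ha : HasDerivAt (fun x => F (x, y₀)) a x₀)
    (hb : HasDerivAt (fun y => F (x₀, y)) b y₀) (hb₀ : b ≠ 0) (hY₀ : Y x₀ = y₀)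
    (hY : ContinuousAt Y x₀) (hlevel : ∀ᶠ x in 𝓝 x₀, F (x, Y x) = F (x₀, y₀)) :
    HasDerivAt Y (-a / b) x₀ := by
  subst hY₀
  obtain ⟨F', hF'⟩ := hF
  obtain rfl : a = F' (1, 0) :=
    ha.unique (hF'.comp_hasDerivAt x₀ ((hasDerivAt_id x₀).prodMk (hasDerivAt_const _ _)))
  obtain rfl : b = F' (0, 1) :=
    hb.unique (hF'.comp_hasDerivAt _ ((hasDerivAt_const _ _).prodMk (hasDerivAt_id _)))
  set P : ℝ → ℝ × ℝ := fun x => (x - x₀, Y x - Y x₀)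
  have hP : ∀ x, F' (P x) = (x - x₀) * F' (1, 0) + (Y x - Y x₀) * F' (0, 1) := fun x =>
    F'.apply_prod_mk _ _
  have hFP : (fun x => F' (P x)) =o[𝓝 x₀] P := by
    refine ((hasFDerivAt_iff_isLittleO.mp hF').comp_tendsto
      (continuousAt_id.prodMk hY)).neg_left.congr' ?_ (by rfl)
    filter_upwards [hlevel] with x hx
    simp [P, hx, -map_sub]
  -- `P = Q + R` with `Q = O(x - x₀)` explicit and `R = o(P)`, whence `P = O(x - x₀)`.
  have hR : (fun x => ((0 : ℝ), (F' (0, 1))⁻¹ * F' (P x))) =o[𝓝 x₀] P :=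
    (isLittleO_zero _ _).prod_left (hFP.const_mul_left _)
  have hQ : (fun x => (x - x₀, -(F' (1, 0) / F' (0, 1)) * (x - x₀))) =O[𝓝 x₀] fun x => x - x₀ :=
    (isBigO_refl _ _).prod_left ((isBigO_refl _ _).const_mul_left _)
  have hPu : P =O[𝓝 x₀] fun x => x - x₀ := by
    refine hR.right_isBigO_sub.trans (hQ.congr_left fun x => ?_)
    ext
    · simp [P]
    · simp only [Prod.snd_sub, hP, P]
      field_simp
      ring
  rw [hasDerivAt_iff_isLittleO]
  refine ((hFP.trans_isBigO hPu).const_mul_left (F' (0, 1))⁻¹).congr_left fun x => ?_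
  rw [hP, smul_eq_mul]
  field_simp
  ring

theorem exists_mem_ne_differentiableAt {I : Set ℝ} {h : ℝ → ℝ}
    (hh : MonotoneOn h I ∨ AntitoneOn h I) (hI : IsOpen I) {x : ℝ} (hx : x ∈ I) :
    ∃ y ∈ I, y ≠ x ∧ DifferentiableAt ℝ h y := by
  wlog hmono : MonotoneOn h I generalizing h
  · obtain ⟨y, hy, hyx, hd⟩ := this (h := fun x => -h x) (Or.inl (hh.resolve_left hmono).neg)
      (hh.resolve_left hmono).neg
    exact ⟨y, hy, hyx, by simpa using hd.neg⟩
  have : (ae (volume.restrict I)).NeBot :=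
    ae_restrict_neBot.2 (hI.measure_ne_zero volume ⟨x, hx⟩)
  obtain ⟨y, hyI, hyx, hdiff⟩ := ((ae_restrict_mem hI.measurableSet).and
    ((ae_restrict_of_ae (volume.ae_ne x)).and
      (hmono.ae_differentiableWithinAt hI.measurableSet))).exists
  exact ⟨y, hyI, hyx, hdiff.differentiableAt (hI.mem_nhds hyI)⟩

theorem StrictMonoOn.image_mem_nhds {I : Set ℝ} {h : ℝ → ℝ} (hh : StrictMonoOn h I)
    (hc : ContinuousOn h I) (hI : IsOpen I) (hIc : I.OrdConnected) {y : ℝ} (hy : y ∈ I) :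
    h '' I ∈ 𝓝 (h y) := by
  obtain ⟨a, ha, b, hb, hay, hyb⟩ := hI.exists_mem_lt_mem_lt hy
  exact mem_of_superset (Icc_mem_nhds (hh ha hy hay) (hh hy hb hyb))
    (hc.surjOn_Icc (hs := hIc) ha hb)

theorem exists_continuousAt_add_eq {I : Set ℝ} {h : ℝ → ℝ}
    (hh : StrictMonoOn h I ∨ StrictAntiOn h I) (hc : ContinuousOn h I) (hI : IsOpen I)
    (hIc : I.OrdConnected) {x₀ y₀ : ℝ} (hx₀ : x₀ ∈ I) (hy₀ : y₀ ∈ I) :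
    ∃ Y : ℝ → ℝ, Y x₀ = y₀ ∧ ContinuousAt Y x₀ ∧
      ∀ᶠ x in 𝓝 x₀, Y x ∈ I ∧ h x + h (Y x) = h x₀ + h y₀ := by
  wlog hmono : StrictMonoOn h I generalizing h
  · obtain ⟨Y, hY₀, hYc, hYI⟩ := this (h := fun x => -h x)
      (Or.inl (hh.resolve_left hmono).neg) hc.neg (hh.resolve_left hmono).neg
    refine ⟨Y, hY₀, hYc, hYI.mono fun x hx => ⟨hx.1, by linarith [hx.2]⟩⟩
  have hinv : LeftInvOn (invFunOn h I) h I := hmono.injOn.leftInvOn_invFunOn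
  have hinv_mono : StrictMonoOn (invFunOn h I) (h '' I) := by
    rintro _ ⟨a, ha, rfl⟩ _ ⟨b, hb, rfl⟩ hab
    rw [hinv ha, hinv hb]
    exact (hmono.lt_iff_lt ha hb).mp hab
  have hcont : ContinuousAt (invFunOn h I) (h y₀) :=
    hinv_mono.continuousAt_of_image_mem_nhds (hmono.image_mem_nhds hc hI hIc hy₀)
      (by rw [hinv.image_image, hinv hy₀]; exact hI.mem_nhds hy₀)
  have hlin : ContinuousAt (fun x => h x₀ + h y₀ - h x) x₀ :=
    continuousAt_const.sub (hc.continuousAt (hI.mem_nhds hx₀))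
  have hval : h x₀ + h y₀ - h x₀ = h y₀ := by ring
  refine ⟨fun x => invFunOn h I (h x₀ + h y₀ - h x), by simpa using hinv hy₀,
    hcont.comp_of_eq hlin hval, ?_⟩
  filter_upwards [hlin.preimage_mem_nhds (hval ▸ hmono.image_mem_nhds hc hI hIc hy₀)] with x hx
  exact ⟨invFunOn_mem hx, by rw [invFunOn_eq hx]; ring⟩

theorem Set.OrdConnected.injOn_of_deriv_ne_zero {I : Set ℝ} {g : ℝ → ℝ} (hIc : I.OrdConnected)
    (hg : ContinuousOn g I) (hg' : ∀ x ∈ I, deriv g x ≠ 0) : InjOn g I := by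
  intro x hx y hy hxy
  by_contra hne
  wlog hlt : x < y generalizing x y
  · exact this hy hx hxy.symm (Ne.symm hne) ((Ne.symm hne).lt_of_le (not_lt.mp hlt))
  obtain ⟨c, hc, hc0⟩ := exists_deriv_eq_zero hlt (hg.mono (hIc.out hx hy)) hxy
  exact hg' c (hIc.out hx hy (Ioo_subset_Icc_self hc)) hc0

noncomputable def cauchyQuotient (f g : ℝ → ℝ) (x y : ℝ) : ℝ := (f x - f y) / (g x - g y)

theorem cauchyQuotient_comm (f g : ℝ → ℝ) (x y : ℝ) :
    cauchyQuotient f g x y = cauchyQuotient f g y x := by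
  rw [cauchyQuotient, cauchyQuotient, ← neg_sub (f y), ← neg_sub (g y), neg_div_neg_eq]

theorem hasDerivAt_cauchyQuotient {f g : ℝ → ℝ} {x y : ℝ} (hf : DifferentiableAt ℝ f y)
    (hg : DifferentiableAt ℝ g y) (hxy : g x ≠ g y) :
    HasDerivAt (cauchyQuotient f g x)
      ((cauchyQuotient f g x y * deriv g y - deriv f y) / (g x - g y)) y := by
  have hne : g x - g y ≠ 0 := sub_ne_zero.2 hxy
  refine ((hf.hasDerivAt.const_sub (f x)).div (hg.hasDerivAt.const_sub (g x)) hne).congr_deriv ?_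
  unfold cauchyQuotient
  field_simp
  ring

theorem differentiableAt_cauchyQuotient {f g : ℝ → ℝ} {x y : ℝ} (hfx : DifferentiableAt ℝ f x)
    (hfy : DifferentiableAt ℝ f y) (hgx : DifferentiableAt ℝ g x) (hgy : DifferentiableAt ℝ g y)
    (hxy : g x ≠ g y) :
    DifferentiableAt ℝ (fun p : ℝ × ℝ => cauchyQuotient f g p.1 p.2) (x, y) := by
  have hne : g x - g y ≠ 0 := sub_ne_zero.2 hxy
  unfold cauchyQuotient
  fun_prop (disch := exact hne)

section Means

variable {I : Set ℝ} {f g h : ℝ → ℝ}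

theorem quasiMean_mem_and_eq (hIc : I.OrdConnected) (hc : ContinuousOn h I) {x y : ℝ}
    (hx : x ∈ I) (hy : y ∈ I) :
    quasiMean I h x y ∈ I ∧ h (quasiMean I h x y) = (h x + h y) / 2 := by
  have hmid : (h x + h y) / 2 ∈ uIcc (h x) (h y) := by
    rcases le_total (h x) (h y) with hle | hle
    · exact mem_uIcc.2 (Or.inl ⟨by linarith, by linarith⟩)
    · exact mem_uIcc.2 (Or.inr ⟨by linarith, by linarith⟩)
  have := hc.surjOn_uIcc (hs := hIc) hx hy hmid
  exact ⟨invFunOn_mem this, invFunOn_eq this⟩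

theorem deriv_div_deriv_cauchyMean (hIc : I.OrdConnected) (hf : ∀ x ∈ I, DifferentiableAt ℝ f x)
    (hg : ∀ x ∈ I, DifferentiableAt ℝ g x) (hg' : ∀ x ∈ I, deriv g x ≠ 0) (hg_inj : InjOn g I)
    {x y : ℝ} (hx : x ∈ I) (hy : y ∈ I) (hxy : x ≠ y) :
    deriv f (cauchyMean I f g x y) / deriv g (cauchyMean I f g x y) = cauchyQuotient f g x y := by
  have : ∃ c ∈ I, deriv f c / deriv g c = cauchyQuotient f g x y := by
    wlog hlt : x < y generalizing x y
    · rw [cauchyQuotient_comm]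
      exact this hy hx hxy.symm (hxy.symm.lt_of_le (not_lt.mp hlt))
    have hsub : Icc x y ⊆ I := hIc.out hx hy
    obtain ⟨c, hc, hcMVT⟩ := exists_ratio_deriv_eq_ratio_slope f hlt
      (fun t ht => (hf t (hsub ht)).continuousAt.continuousWithinAt)
      (fun t ht => (hf t (hsub (Ioo_subset_Icc_self ht))).differentiableWithinAt) g
      (fun t ht => (hg t (hsub ht)).continuousAt.continuousWithinAt)
      (fun t ht => (hg t (hsub (Ioo_subset_Icc_self ht))).differentiableWithinAt)
    have hcI : c ∈ I := hsub (Ioo_subset_Icc_self hc)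
    refine ⟨c, hcI, ?_⟩
    rw [cauchyQuotient, div_eq_div_iff (hg' c hcI) (sub_ne_zero.2 (hg_inj.ne hx hy hxy))]
    linear_combination -hcMVT
  rw [cauchyMean, if_neg hxy]
  exact invFunOn_eq this

variable {M : ℝ → ℝ → ℝ}

theorem cauchyQuotient_eq_iff_add_eq (hh : InjOn h I)
    (hφ : InjOn (fun t => deriv f t / deriv g t) I)
    (hM : ∀ x ∈ I, ∀ y ∈ I, M x y ∈ I ∧ h (M x y) = (h x + h y) / 2)
    (hMΔ : ∀ x ∈ I, ∀ y ∈ I, x ≠ y →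
      deriv f (M x y) / deriv g (M x y) = cauchyQuotient f g x y)
    {x y x' y' : ℝ} (hx : x ∈ I) (hy : y ∈ I) (hx' : x' ∈ I) (hy' : y' ∈ I) (hxy : x ≠ y)
    (hxy' : x' ≠ y') :
    cauchyQuotient f g x y = cauchyQuotient f g x' y' ↔ h x + h y = h x' + h y' := by
  rw [← hMΔ x hx y hy hxy, ← hMΔ x' hx' y' hy' hxy', hφ.eq_iff (hM x hx y hy).1 (hM x' hx' y' hy').1,
    ← hh.eq_iff (hM x hx y hy).1 (hM x' hx' y' hy').1, (hM x hx y hy).2, (hM x' hx' y' hy').2,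
    div_left_inj' two_ne_zero]

theorem cauchyQuotient_mul_deriv_ne (hh : InjOn h I) (hg' : ∀ x ∈ I, deriv g x ≠ 0)
    (hφ : InjOn (fun t => deriv f t / deriv g t) I)
    (hM : ∀ x ∈ I, ∀ y ∈ I, M x y ∈ I ∧ h (M x y) = (h x + h y) / 2)
    (hMΔ : ∀ x ∈ I, ∀ y ∈ I, x ≠ y →
      deriv f (M x y) / deriv g (M x y) = cauchyQuotient f g x y)
    {x y : ℝ} (hx : x ∈ I) (hy : y ∈ I) (hxy : x ≠ y) :
    cauchyQuotient f g x y * deriv g y ≠ deriv f y := by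
  rw [ne_eq, ← eq_div_iff (hg' y hy), ← hMΔ x hx y hy hxy]
  refine hφ.ne (hM x hx y hy).1 hy fun hMy => hxy (hh hx hy ?_)
  have := (hM x hx y hy).2
  rw [hMy] at this
  linarith

end Means

section LevelSets

variable {I : Set ℝ} {f g h : ℝ → ℝ}

theorem differentiableAt_and_deriv_mul_add_eq_zero (hI : IsOpen I) (hIc : I.OrdConnected)
    (hf : ∀ x ∈ I, DifferentiableAt ℝ f x) (hg : ∀ x ∈ I, DifferentiableAt ℝ g x)
    (hg_inj : InjOn g I) (hh : StrictMonoOn h I ∨ StrictAntiOn h I) (hc : ContinuousOn h I)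
    (hlevel : ∀ x ∈ I, ∀ y ∈ I, ∀ x' ∈ I, ∀ y' ∈ I, x ≠ y → x' ≠ y' →
      h x + h y = h x' + h y' → cauchyQuotient f g x y = cauchyQuotient f g x' y')
    (hpartial : ∀ x ∈ I, ∀ y ∈ I, x ≠ y → cauchyQuotient f g x y * deriv g y ≠ deriv f y)
    {x₀ y₀ : ℝ} (hx₀ : x₀ ∈ I) (hy₀ : y₀ ∈ I) (hxy : x₀ ≠ y₀)
    (hdy : DifferentiableAt ℝ h y₀) :
    DifferentiableAt ℝ h x₀ ∧
      deriv h x₀ * (cauchyQuotient f g x₀ y₀ * deriv g y₀ - deriv f y₀) +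
        deriv h y₀ * (cauchyQuotient f g x₀ y₀ * deriv g x₀ - deriv f x₀) = 0 := by
  obtain ⟨Y, hY₀, hYc, hYI⟩ := exists_continuousAt_add_eq hh hc hI hIc hx₀ hy₀
  have hgxy : g x₀ ≠ g y₀ := hg_inj.ne hx₀ hy₀ hxy
  have hne : ∀ᶠ x in 𝓝 x₀, x - Y x ≠ 0 :=
    (continuousAt_id.sub hYc).eventually_ne (by simpa [hY₀, sub_eq_zero] using hxy)
  have hlev : ∀ᶠ x in 𝓝 x₀, cauchyQuotient f g x (Y x) = cauchyQuotient f g x₀ y₀ := by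
    filter_upwards [hYI, hne, hI.mem_nhds hx₀] with x ⟨hYx, hsum⟩ hxY hx
    exact hlevel x hx (Y x) hYx x₀ hx₀ y₀ hy₀ (sub_ne_zero.1 hxY) hxy hsum
  have hleft : HasDerivAt (fun x => cauchyQuotient f g x y₀)
      ((cauchyQuotient f g x₀ y₀ * deriv g x₀ - deriv f x₀) / (g y₀ - g x₀)) x₀ := by
    have := hasDerivAt_cauchyQuotient (hf x₀ hx₀) (hg x₀ hx₀) hgxy.symm
    rw [cauchyQuotient_comm f g y₀ x₀] at this
    exact this.congr_of_eventuallyEq (Eventually.of_forall fun x => cauchyQuotient_comm f g x y₀)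
  have hright := hasDerivAt_cauchyQuotient (hf y₀ hy₀) (hg y₀ hy₀) hgxy
  have hb : (cauchyQuotient f g x₀ y₀ * deriv g y₀ - deriv f y₀) / (g x₀ - g y₀) ≠ 0 :=
    div_ne_zero (sub_ne_zero.2 (hpartial x₀ hx₀ y₀ hy₀ hxy)) (sub_ne_zero.2 hgxy)
  have hY := (differentiableAt_cauchyQuotient (hf x₀ hx₀) (hf y₀ hy₀) (hg x₀ hx₀) (hg y₀ hy₀)
    hgxy).hasDerivAt_implicit hleft hright hb hY₀ hYc hlev
  have hhY := ((hY₀ ▸ hdy.hasDerivAt).comp x₀ hY).const_sub (h x₀ + h y₀)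
  have hhx : HasDerivAt h _ x₀ := hhY.congr_of_eventuallyEq <| by
    filter_upwards [hYI] with x hx
    rw [comp_apply]
    linear_combination hx.2
  refine ⟨hhx.differentiableAt, ?_⟩
  rw [hhx.deriv, hY₀]
  have := sub_ne_zero.2 hgxy
  have := sub_ne_zero.2 (hpartial x₀ hx₀ y₀ hy₀ hxy)
  field_simp
  ring

theorem deriv_ne_zero_and_sub_mul_add_eq (hI : IsOpen I) (hIc : I.OrdConnected)
    (hf : ∀ x ∈ I, DifferentiableAt ℝ f x) (hg : ∀ x ∈ I, DifferentiableAt ℝ g x)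
    (hg_inj : InjOn g I) (hh : StrictMonoOn h I ∨ StrictAntiOn h I) (hc : ContinuousOn h I)
    (hlevel : ∀ x ∈ I, ∀ y ∈ I, ∀ x' ∈ I, ∀ y' ∈ I, x ≠ y → x' ≠ y' →
      h x + h y = h x' + h y' → cauchyQuotient f g x y = cauchyQuotient f g x' y')
    (hpartial : ∀ x ∈ I, ∀ y ∈ I, x ≠ y → cauchyQuotient f g x y * deriv g y ≠ deriv f y) :
    (∀ x ∈ I, deriv h x ≠ 0) ∧ ∀ x ∈ I, ∀ y ∈ I,
      (f x - f y) * (deriv g x / deriv h x + deriv g y / deriv h y) =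
        (g x - g y) * (deriv f x / deriv h x + deriv f y / deriv h y) := by
  have hkey := fun {x y} (hx : x ∈ I) (hy : y ∈ I) hxy hdy =>
    differentiableAt_and_deriv_mul_add_eq_zero hI hIc hf hg hg_inj hh hc hlevel hpartial hx hy hxy hdy
  have hdiff : ∀ x ∈ I, DifferentiableAt ℝ h x := fun x hx => by
    obtain ⟨y, hy, hyx, hdy⟩ :=
      exists_mem_ne_differentiableAt (hh.imp (·.monotoneOn) (·.antitoneOn)) hI hx
    exact (hkey hx hy hyx.symm hdy).1
  have hne : ∀ x ∈ I, deriv h x ≠ 0 := by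
    intro x hx hx0
    obtain ⟨-, -, b, hb, -, hxb⟩ := hI.exists_mem_lt_mem_lt hx
    obtain ⟨c, hc, hcslope⟩ := exists_deriv_eq_slope h hxb (hc.mono (hIc.out hx hb))
      fun t ht => (hdiff t (hIc.out hx hb (Ioo_subset_Icc_self ht))).differentiableWithinAt
    have hcI : c ∈ I := hIc.out hx hb (Ioo_subset_Icc_self hc)
    have hc0 : deriv h c ≠ 0 := by
      rw [hcslope]
      exact div_ne_zero (sub_ne_zero.2 ((hh.elim (·.injOn) (·.injOn)).ne hb hx hxb.ne'))
        (sub_ne_zero.2 hxb.ne')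
    have := (hkey hx hcI hc.1.ne (hdiff c hcI)).2
    rw [hx0, zero_mul, zero_add] at this
    refine hpartial c hcI x hx hc.1.ne' ?_
    rw [cauchyQuotient_comm]
    exact sub_eq_zero.1 ((mul_eq_zero.1 this).resolve_left hc0)
  refine ⟨hne, fun x hx y hy => ?_⟩
  rcases eq_or_ne x y with rfl | hxy
  · ring
  have hrel := (hkey hx hy hxy (hdiff y hy)).2
  have := sub_ne_zero.2 (hg_inj.ne hx hy hxy)
  have := hne x hx
  have := hne y hy
  rw [cauchyQuotient] at hrel
  field_simp at hrel ⊢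
  linear_combination hrel

end LevelSets

section Conic

variable {α : Type*} {S : Set α} {f g U V : α → ℝ}

theorem exists_affine_of_sub_mul_add_eq
    (hkey : ∀ x ∈ S, ∀ y ∈ S, (f x - f y) * (V x + V y) = (g x - g y) * (U x + U y))
    {p q r : α} (hp : p ∈ S) (hq : q ∈ S) (hr : r ∈ S)
    (hpqr : (f p - f q) * (g q - g r) ≠ (f q - f r) * (g p - g q)) :
    ∃ a b c a' b' c' : ℝ, ∀ x ∈ S,
      U x = a * f x + b * g x + c ∧ V x = a' * f x + b' * g x + c' := by
  have hD := sub_ne_zero.2 hpqr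
  set D := (f p - f q) * (g q - g r) - (f q - f r) * (g p - g q)
  -- In `hkey x p - hkey x q` and `hkey x q - hkey x r` the terms `f x * V x`, `g x * U x` cancel:
  -- two linear equations for `U x`, `V x` with determinant `D`, solved by Cramer's rule.
  set c₁ := f p * V p - f q * V q - (g p * U p - g q * U q)
  set c₂ := f q * V q - f r * V r - (g q * U q - g r * U r)
  refine ⟨((f q - f r) * (V p - V q) - (f p - f q) * (V q - V r)) / D,
    ((f p - f q) * (U q - U r) - (f q - f r) * (U p - U q)) / D,
    ((f p - f q) * c₂ - (f q - f r) * c₁) / D,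
    ((g q - g r) * (V p - V q) - (g p - g q) * (V q - V r)) / D,
    ((g p - g q) * (U q - U r) - (g q - g r) * (U p - U q)) / D,
    ((g p - g q) * c₂ - (g q - g r) * c₁) / D, fun x hx => ⟨?_, ?_⟩⟩
  · field_simp
    linear_combination (f p - f q) * (hkey x hx q hq - hkey x hx r hr) -
      (f q - f r) * (hkey x hx p hp - hkey x hx q hq)
  · field_simp
    linear_combination (g p - g q) * (hkey x hx q hq - hkey x hx r hr) -
      (g q - g r) * (hkey x hx p hp - hkey x hx q hq)

theorem exists_conic_of_sub_mul_add_eq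
    (hkey : ∀ x ∈ S, ∀ y ∈ S, (f x - f y) * (V x + V y) = (g x - g y) * (U x + U y))
    {p : α} (hp : p ∈ S) (hVp : V p ≠ 0) {a b c a' b' c' : ℝ}
    (hUV : ∀ x ∈ S, U x = a * f x + b * g x + c ∧ V x = a' * f x + b' * g x + c') :
    ∃ α β γ δ ε η : ℝ, (α, β, γ) ≠ (0, 0, 0) ∧ ∀ x ∈ S,
      α * f x ^ 2 + β * f x * g x + γ * g x ^ 2 + δ * f x + ε * g x + η = 0 := by
  set δ := c' + V p - a' * f p + a * g p
  set ε := b * g p - b' * f p - c - U p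
  set η := g p * (c + U p) - f p * (c' + V p)
  have hconic : ∀ x ∈ S,
      a' * f x ^ 2 + (b' - a) * f x * g x + -b * g x ^ 2 + δ * f x + ε * g x + η = 0 := by
    intro x hx
    linear_combination hkey x hx p hp - (f x - f p) * (hUV x hx).2 + (g x - g p) * (hUV x hx).1
  by_cases hdeg : (a', b' - a, -b) = (0, 0, 0)
  · -- Then the curve lies on the line `δ f + ε g + η = 0` (`δ = 2 V p`), whose square is a conic.
    obtain ⟨ha', hb', hb⟩ : a' = 0 ∧ b' - a = 0 ∧ -b = 0 := by simpa using hdeg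
    have hδ : δ ≠ 0 := by
      have : δ = 2 * V p := by
        linear_combination -(hUV p hp).2 - 2 * f p * ha' - g p * hb'
      rw [this]
      exact mul_ne_zero two_ne_zero hVp
    refine ⟨δ ^ 2, 2 * δ * ε, ε ^ 2, 2 * δ * η, 2 * ε * η, η ^ 2, by simp [hδ], fun x hx => ?_⟩
    have hline : δ * f x + ε * g x + η = 0 := by
      linear_combination hconic x hx - f x ^ 2 * ha' - f x * g x * hb' - g x ^ 2 * hb
    linear_combination (δ * f x + ε * g x + η) * hline
  · exact ⟨_, _, _, _, _, _, hdeg, hconic⟩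

end Conic

/-- If the Cauchy mean of a 𝒞₁ pair is a quasiarithmetic mean, then the curve
x ↦ (f x, g x) lies on a conic section. -/
theorem conic_of_cauchyMean_eq_quasiMean
    (I : Set ℝ) (hI : IsOpen I) (hIc : I.OrdConnected) (hne : I.Nonempty)
    (f g : ℝ → ℝ)
    (hf : ContDiffOn ℝ 1 f I) (hg : ContDiffOn ℝ 1 g I)
    (hg' : ∀ x ∈ I, deriv g x ≠ 0)
    (hmono : StrictMonoOn (fun x => deriv f x / deriv g x) I ∨
             StrictAntiOn (fun x => deriv f x / deriv g x) I)
    (h : ℝ → ℝ) (hcont : ContinuousOn h I)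
    (hhmono : StrictMonoOn h I ∨ StrictAntiOn h I)
    (heq : ∀ x ∈ I, ∀ y ∈ I, cauchyMean I f g x y = quasiMean I h x y) :
    ∃ α β γ δ ε η : ℝ, (α, β, γ) ≠ (0, 0, 0) ∧
      ∀ x ∈ I,
        α * f x ^ 2 + β * f x * g x + γ * g x ^ 2 + δ * f x + ε * g x + η = 0 := by
  have hfd : ∀ x ∈ I, DifferentiableAt ℝ f x := fun x hx =>
    (hf.differentiableOn one_ne_zero).differentiableAt (hI.mem_nhds hx)
  have hgd : ∀ x ∈ I, DifferentiableAt ℝ g x := fun x hx =>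
    (hg.differentiableOn one_ne_zero).differentiableAt (hI.mem_nhds hx)
  have hg_inj : InjOn g I := hIc.injOn_of_deriv_ne_zero hg.continuousOn hg'
  have hφ : InjOn (fun x => deriv f x / deriv g x) I := hmono.elim (·.injOn) (·.injOn)
  have hh : InjOn h I := hhmono.elim (·.injOn) (·.injOn)
  have hM := fun x (hx : x ∈ I) y (hy : y ∈ I) => quasiMean_mem_and_eq hIc hcont hx hy
  have hMΔ : ∀ x ∈ I, ∀ y ∈ I, x ≠ y → deriv f (quasiMean I h x y) /
      deriv g (quasiMean I h x y) = cauchyQuotient f g x y := fun x hx y hy hxy => by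
    rw [← heq x hx y hy]
    exact deriv_div_deriv_cauchyMean hIc hfd hgd hg' hg_inj hx hy hxy
  have hlevel := fun x (hx : x ∈ I) y (hy : y ∈ I) x' (hx' : x' ∈ I) y' (hy' : y' ∈ I) hxy hxy' =>
    cauchyQuotient_eq_iff_add_eq hh hφ hM hMΔ hx hy hx' hy' hxy hxy'
  obtain ⟨hh', hkey⟩ := deriv_ne_zero_and_sub_mul_add_eq hI hIc hfd hgd hg_inj hhmono hcont
    (fun x hx y hy x' hx' y' hy' hxy hxy' => (hlevel x hx y hy x' hx' y' hy' hxy hxy').2)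
    (fun x hx y hy hxy => cauchyQuotient_mul_deriv_ne hh hg' hφ hM hMΔ hx hy hxy)
  obtain ⟨q, hq⟩ := hne
  obtain ⟨p, hp, r, hr, hpq, hqr⟩ := hI.exists_mem_lt_mem_lt hq
  have hpqr : (f p - f q) * (g q - g r) ≠ (f q - f r) * (g p - g q) := by
    rw [ne_eq, ← div_eq_div_iff (sub_ne_zero.2 (hg_inj.ne hp hq hpq.ne))
      (sub_ne_zero.2 (hg_inj.ne hq hr hqr.ne))]
    refine fun hslope => (hpq.trans hqr).ne (hh hp hr ?_)
    linarith [(hlevel p hp q hq q hq r hr hpq.ne hqr.ne).1 hslope]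
  obtain ⟨a, b, c, a', b', c', hUV⟩ := exists_affine_of_sub_mul_add_eq hkey hp hq hr hpqr
  exact exists_conic_of_sub_mul_add_eq hkey hp (div_ne_zero (hg' p hp) (hh' p hp)) hUV
end

section
/- Let (f,g) ∈ 𝒞₂(I) and suppose there exist α, β, γ, δ, ε, η ∈ ℝ with (α,β,γ) ≠ (0,0,0) such that αf² + βfg + γg² + δf + εg + η = 0 on I. Then there exist real constants a, b, c such that a(f')² + b f'g' + c(g')² = (W^{2,1}_{f,g})^{2/3} on I, where W^{2,1}_{f,g} = f''g' − f'g''. -/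
/-- The real cube root of a real number. -/
noncomputable def cbrt (x : ℝ) : ℝ :=
  if 0 ≤ x then x ^ ((1 : ℝ) / 3) else -((-x) ^ ((1 : ℝ) / 3))

/-!
Write `u = 2αf + βg + δ`, `v = βf + 2γg + ε` for the gradient of the conic along `(f, g)`,
`Q = αf'² + βf'g' + γg'²` and `W = f''g' - f'g''`. Differentiating the conic once gives
`u f' + v g' = 0`, and differentiating that gives `2Q + u f'' + v g'' = 0`; eliminating `v`
yields `u W = -2 Q g'`. With this, `u² Q / g'²` has zero derivative, so it is a constant `c` on
the interval, and squaring `u W = -2 Q g'` gives `c W² = 4 Q³`. Finally `c ≠ 0`: otherwise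
`Q = g'² q(f'/g')` vanishes identically for `q(t) = αt² + βt + γ`, and a nonzero quadratic
cannot vanish along a function with nonvanishing derivative. Hence `cbrt (4 / c) • Q = W^{2/3}`.
-/

open Filter

lemma cbrt_pow_three (x : ℝ) : cbrt x ^ 3 = x := by
  unfold cbrt
  split_ifs with hx
  · rw [← Real.rpow_natCast, ← Real.rpow_mul hx]
    norm_num
  · rw [Odd.neg_pow (by decide), ← Real.rpow_natCast, ← Real.rpow_mul (by linarith)]
    norm_num

lemma cbrt_mul_eq_cbrt_sq_of_mul_sq_eq {c k p w : ℝ} (hc : c ≠ 0) (h : c * w ^ 2 = k * p ^ 3) :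
    cbrt (k / c) * p = cbrt w ^ 2 := by
  refine (Odd.pow_inj (n := 3) (by decide)).1 ?_
  rw [mul_pow, cbrt_pow_three, ← pow_mul, mul_comm 2 3, pow_mul, cbrt_pow_three]
  field_simp
  linear_combination -h

section Deriv

variable {𝕜 F : Type*} [NontriviallyNormedField 𝕜] [NormedAddCommGroup F] [NormedSpace 𝕜 F]
  {f : 𝕜 → F} {f' : F} {s : Set 𝕜} {x : 𝕜}

theorem HasDerivAt.eq_zero_of_eqOn_zero (hf : HasDerivAt f f' x) (hs : IsOpen s) (hx : x ∈ s)
    (h0 : ∀ t ∈ s, f t = 0) : f' = 0 :=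
  hf.unique <| (hasDerivAt_const x 0).congr_of_eventuallyEq <|
    eventuallyEq_of_mem (hs.mem_nhds hx) h0

theorem ContDiffOn.hasDerivAt_deriv_of_isOpen
    (hf : ContDiffOn 𝕜 1 f s) (hs : IsOpen s) (hx : x ∈ s) : HasDerivAt f (deriv f x) x :=
  ((hf.differentiableOn one_ne_zero).differentiableAt (hs.mem_nhds hx)).hasDerivAt

theorem ContDiffOn.hasDerivAt_iteratedDeriv_two_of_isOpen
    (hf : ContDiffOn 𝕜 2 f s) (hs : IsOpen s) (hx : x ∈ s) :
    HasDerivAt (deriv f) (iteratedDeriv 2 f x) x := by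
  rw [iteratedDeriv_succ', iteratedDeriv_one]
  exact ((contDiffOn_succ_iff_deriv_of_isOpen hs).1 hf).2.2.hasDerivAt_deriv_of_isOpen hs hx

end Deriv

theorem quadratic_coeffs_eq_zero_of_comp_eq_zero {φ : ℝ → ℝ} {s : Set ℝ} {α β γ x : ℝ}
    (hs : IsOpen s) (hφ : ∀ y ∈ s, deriv φ y ≠ 0) (h : ∀ y ∈ s, α * φ y ^ 2 + β * φ y + γ = 0)
    (hx : x ∈ s) : α = 0 ∧ β = 0 ∧ γ = 0 := by
  have hφd : ∀ y ∈ s, HasDerivAt φ (deriv φ y) y := fun y hy =>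
    (differentiableAt_of_deriv_ne_zero (hφ y hy)).hasDerivAt
  have hlin : ∀ y ∈ s, 2 * α * φ y + β = 0 := fun y hy => by
    have h' := ((((hφd y hy).pow 2).const_mul α).add ((hφd y hy).const_mul β)).add_const γ
      |>.eq_zero_of_eqOn_zero hs hy h
    refine (mul_eq_zero.1 ?_).resolve_right (hφ y hy)
    linear_combination h'
  have hα : α = 0 := by
    have h' := (((hφd x hx).const_mul (2 * α)).add_const β).eq_zero_of_eqOn_zero hs hx hlin
    simpa [hφ x hx] using h'
  have hβ : β = 0 := by simpa [hα] using hlin x hx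
  exact ⟨hα, hβ, by simpa [hα, hβ] using h x hx⟩

section Conic

variable {I : Set ℝ} {f f' f'' g g' g'' : ℝ → ℝ} {α β γ δ ε η : ℝ} {x : ℝ}

theorem hasDerivAt_conic (hf : HasDerivAt f (f' x) x) (hg : HasDerivAt g (g' x) x) :
    HasDerivAt (fun t => α * f t ^ 2 + β * f t * g t + γ * g t ^ 2 + δ * f t + ε * g t + η)
      ((2 * α * f x + β * g x + δ) * f' x + (β * f x + 2 * γ * g x + ε) * g' x) x :=
  ((((((hf.pow 2).const_mul α).add ((hf.const_mul β).mul hg)).add ((hg.pow 2).const_mul γ)).add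
    (hf.const_mul δ)).add (hg.const_mul ε)).add_const η |>.congr_deriv (by push_cast; ring)

theorem hasDerivAt_conic_deriv (hf : HasDerivAt f (f' x) x) (hg : HasDerivAt g (g' x) x)
    (hf' : HasDerivAt f' (f'' x) x) (hg' : HasDerivAt g' (g'' x) x) :
    HasDerivAt (fun t => (2 * α * f t + β * g t + δ) * f' t + (β * f t + 2 * γ * g t + ε) * g' t)
      (2 * (α * f' x ^ 2 + β * f' x * g' x + γ * g' x ^ 2) + (2 * α * f x + β * g x + δ) * f'' x
        + (β * f x + 2 * γ * g x + ε) * g'' x) x :=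
  ((((hf.const_mul (2 * α)).add (hg.const_mul β)).add_const δ).mul hf').add
    ((((hf.const_mul β).add (hg.const_mul (2 * γ))).add_const ε).mul hg')
    |>.congr_deriv (by simp only [Pi.add_apply]; ring)

theorem hasDerivAt_conic_invariant (hf : HasDerivAt f (f' x) x) (hg : HasDerivAt g (g' x) x)
    (hf' : HasDerivAt f' (f'' x) x) (hg' : HasDerivAt g' (g'' x) x) (hg'0 : g' x ≠ 0)
    (h₁ : (2 * α * f x + β * g x + δ) * f' x + (β * f x + 2 * γ * g x + ε) * g' x = 0)
    (h₂ : 2 * (α * f' x ^ 2 + β * f' x * g' x + γ * g' x ^ 2)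
      + (2 * α * f x + β * g x + δ) * f'' x + (β * f x + 2 * γ * g x + ε) * g'' x = 0) :
    HasDerivAt (fun t => (2 * α * f t + β * g t + δ) ^ 2
      * (α * f' t ^ 2 + β * f' t * g' t + γ * g' t ^ 2) / g' t ^ 2) 0 x := by
  have hu := ((hf.const_mul (2 * α)).add (hg.const_mul β)).add_const δ
  have hQ := (((hf'.pow 2).const_mul α).add ((hf'.const_mul β).mul hg')).add
    ((hg'.pow 2).const_mul γ)
  refine ((hu.pow 2).mul hQ |>.div (hg'.pow 2) (pow_ne_zero 2 hg'0)).congr_deriv ?_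
  simp only [Pi.add_apply, Pi.mul_apply, Pi.pow_apply]
  rw [div_eq_zero_iff]
  left
  push_cast
  -- With `u' = 2αf' + βg'` one has `Q'g' - 2Qg'' = u'W`, so the numerator of the derivative is
  -- `u u' g' (u W + 2 Q g')`, and `u W + 2 Q g' = g' h₂ - g'' h₁`.
  linear_combination ((2 * α * f x + β * g x + δ) * (2 * α * f' x + β * g' x) * g' x) *
    (g' x * h₂ - g'' x * h₁)

theorem exists_mul_wronskian_sq_eq_cube_of_conic (hI : IsOpen I) (hIc : IsPreconnected I)
    (hf : ∀ x ∈ I, HasDerivAt f (f' x) x) (hg : ∀ x ∈ I, HasDerivAt g (g' x) x)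
    (hf' : ∀ x ∈ I, HasDerivAt f' (f'' x) x) (hg' : ∀ x ∈ I, HasDerivAt g' (g'' x) x)
    (hg'0 : ∀ x ∈ I, g' x ≠ 0)
    (hconic : ∀ x ∈ I,
      α * f x ^ 2 + β * f x * g x + γ * g x ^ 2 + δ * f x + ε * g x + η = 0) :
    ∃ c, ∀ x ∈ I, c * (f'' x * g' x - f' x * g'' x) ^ 2
      = 4 * (α * f' x ^ 2 + β * f' x * g' x + γ * g' x ^ 2) ^ 3 := by
  have h₁ : ∀ x ∈ I, (2 * α * f x + β * g x + δ) * f' x + (β * f x + 2 * γ * g x + ε) * g' x = 0 :=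
    fun x hx => (hasDerivAt_conic (hf x hx) (hg x hx)).eq_zero_of_eqOn_zero hI hx hconic
  have h₂ : ∀ x ∈ I, 2 * (α * f' x ^ 2 + β * f' x * g' x + γ * g' x ^ 2)
      + (2 * α * f x + β * g x + δ) * f'' x + (β * f x + 2 * γ * g x + ε) * g'' x = 0 :=
    fun x hx => (hasDerivAt_conic_deriv (hf x hx) (hg x hx) (hf' x hx) (hg' x hx))
      |>.eq_zero_of_eqOn_zero hI hx h₁
  have hE x (hx : x ∈ I) := hasDerivAt_conic_invariant (hf x hx) (hg x hx) (hf' x hx) (hg' x hx)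
    (hg'0 x hx) (h₁ x hx) (h₂ x hx)
  obtain ⟨c, hc⟩ := hI.exists_is_const_of_deriv_eq_zero hIc
    (fun x hx => (hE x hx).differentiableAt.differentiableWithinAt) (fun x hx => (hE x hx).deriv)
  refine ⟨c, fun x hx => ?_⟩
  have hg2 := pow_ne_zero 2 (hg'0 x hx)
  have hc := (div_eq_iff hg2).1 (hc x hx)
  apply mul_right_cancel₀ hg2
  -- `c W² g'² = W² u² Q = Q (u W)²` and `u W = -2 Q g'`.
  linear_combination -(f'' x * g' x - f' x * g'' x) ^ 2 * hc
    + (α * f' x ^ 2 + β * f' x * g' x + γ * g' x ^ 2)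
      * ((2 * α * f x + β * g x + δ) * (f'' x * g' x - f' x * g'' x)
        - 2 * (α * f' x ^ 2 + β * f' x * g' x + γ * g' x ^ 2) * g' x)
      * (g' x * h₂ x hx - g'' x * h₁ x hx)

end Conic

theorem quad_deriv_relation_of_conic_general
    (I : Set ℝ) (hI : IsOpen I) (hIc : I.OrdConnected)
    (f g : ℝ → ℝ)
    (hf : ContDiffOn ℝ 2 f I) (hg : ContDiffOn ℝ 2 g I)
    (hg' : ∀ x ∈ I, deriv g x ≠ 0)
    (hphi' : ∀ x ∈ I, deriv (fun t => deriv f t / deriv g t) x ≠ 0)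
    (α β γ δ ε η : ℝ) (habc : (α, β, γ) ≠ (0, 0, 0))
    (hconic : ∀ x ∈ I,
      α * f x ^ 2 + β * f x * g x + γ * g x ^ 2 + δ * f x + ε * g x + η = 0) :
    ∃ a b c : ℝ, ∀ x ∈ I,
      a * (deriv f x) ^ 2 + b * deriv f x * deriv g x + c * (deriv g x) ^ 2 =
        (cbrt (iteratedDeriv 2 f x * deriv g x - deriv f x * iteratedDeriv 2 g x)) ^ 2 := by
  obtain ⟨c, hc⟩ := exists_mul_wronskian_sq_eq_cube_of_conic hI hIc.isPreconnected
    (fun x hx => (hf.of_le one_le_two).hasDerivAt_deriv_of_isOpen hI hx)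
    (fun x hx => (hg.of_le one_le_two).hasDerivAt_deriv_of_isOpen hI hx)
    (fun x hx => hf.hasDerivAt_iteratedDeriv_two_of_isOpen hI hx)
    (fun x hx => hg.hasDerivAt_iteratedDeriv_two_of_isOpen hI hx) hg' hconic
  refine ⟨cbrt (4 / c) * α, cbrt (4 / c) * β, cbrt (4 / c) * γ, fun x hx => ?_⟩
  have hc0 : c ≠ 0 := by
    rintro rfl
    have hq : ∀ y ∈ I, α * (deriv f y / deriv g y) ^ 2 + β * (deriv f y / deriv g y) + γ = 0 := by
      intro y hy
      have hQ := hc y hy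
      simp only [zero_mul, zero_eq_mul, OfNat.ofNat_ne_zero, false_or, pow_eq_zero_iff,
        ne_eq, not_false_eq_true] at hQ
      have hgy := hg' y hy
      field_simp
      linear_combination hQ
    obtain ⟨rfl, rfl, rfl⟩ := quadratic_coeffs_eq_zero_of_comp_eq_zero hI hphi' hq hx
    exact habc rfl
  linear_combination cbrt_mul_eq_cbrt_sq_of_mul_sq_eq hc0 (hc x hx)

/-- If a 𝒞₂ pair (f,g) satisfies a nontrivial quadratic relation, then the derivatives
satisfy `a(f')² + b f'g' + c(g')² = (W^{2,1}_{f,g})^{2/3}` for some constants a, b, c. -/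
theorem quad_deriv_relation_of_conic
    (I : Set ℝ) (hI : IsOpen I) (hIc : I.OrdConnected) (hne : I.Nonempty)
    (f g : ℝ → ℝ)
    (hf : ContDiffOn ℝ 2 f I) (hg : ContDiffOn ℝ 2 g I)
    (hg' : ∀ x ∈ I, deriv g x ≠ 0)
    (hphi' : ∀ x ∈ I, deriv (fun t => deriv f t / deriv g t) x ≠ 0)
    (α β γ δ ε η : ℝ) (habc : (α, β, γ) ≠ (0, 0, 0))
    (hconic : ∀ x ∈ I,
      α * f x ^ 2 + β * f x * g x + γ * g x ^ 2 + δ * f x + ε * g x + η = 0) :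
    ∃ a b c : ℝ, ∀ x ∈ I,
      a * (deriv f x) ^ 2 + b * deriv f x * deriv g x + c * (deriv g x) ^ 2 =
        (cbrt (iteratedDeriv 2 f x * deriv g x - deriv f x * iteratedDeriv 2 g x)) ^ 2 :=
  quad_deriv_relation_of_conic_general I hI hIc f g hf hg hg' hphi' α β γ δ ε η habc hconic
end

section
/- Let (f,g) ∈ 𝒞₂(I), φ := f'/g', and suppose αf² + βfg + γg² + δf + εg + η = 0 on I with (α,β,γ) ≠ (0,0,0). Then on I the identity φ'·(2αf + βg + δ) + 2g'·(αφ² + βφ + γ) = 0 holds. -/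
/-!
Differentiating the conic relation along `I` gives `f'·(2αf + βg + δ) + g'·(βf + 2γg + ε) = 0`.
Dividing by `g'` turns this into `φ·(2αf + βg + δ) + (βf + 2γg + ε) = 0`, which holds on an
open set and can therefore be differentiated once more; substituting `f' = φ g'`
in the result gives the identity.
-/

open Set

theorem HasDerivAt.eq_zero_of_eqOn_zero_s16 {F : ℝ → ℝ} {F' x : ℝ} {U : Set ℝ} (hU : IsOpen U)
    (hx : x ∈ U) (hF : HasDerivAt F F' x) (h0 : EqOn F 0 U) : F' = 0 :=
  hF.unique <| (hasDerivAt_const x 0).congr_of_eventuallyEq <|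
    Filter.eventuallyEq_of_mem (hU.mem_nhds hx) h0

section Conic

variable {f g : ℝ → ℝ} {U : Set ℝ} (α β γ δ ε η : ℝ)

theorem HasDerivAt.conic {f' g' x : ℝ} (hf : HasDerivAt f f' x) (hg : HasDerivAt g g' x) :
    HasDerivAt (fun t => α * f t ^ 2 + β * f t * g t + γ * g t ^ 2 + δ * f t + ε * g t + η)
      (f' * (2 * α * f x + β * g x + δ) + g' * (β * f x + 2 * γ * g x + ε)) x := by
  have h := (((((hf.fun_pow 2).const_mul α).add ((hf.mul hg).const_mul β)).add
    ((hg.fun_pow 2).const_mul γ)).add (hf.const_mul δ)).add (hg.const_mul ε) |>.add_const η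
  refine (h.congr_deriv ?_).congr_of_eventuallyEq (.of_forall fun t => ?_)
  · norm_num
    ring
  · simp only [Pi.add_apply, Pi.mul_apply]
    ring

variable {α β γ δ ε η}

theorem deriv_conic_eq_zero (hU : IsOpen U) (hf : DifferentiableOn ℝ f U)
    (hg : DifferentiableOn ℝ g U)
    (hconic : ∀ x ∈ U,
      α * f x ^ 2 + β * f x * g x + γ * g x ^ 2 + δ * f x + ε * g x + η = 0)
    {x : ℝ} (hx : x ∈ U) :
    deriv f x * (2 * α * f x + β * g x + δ) + deriv g x * (β * f x + 2 * γ * g x + ε) = 0 :=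
  have hfx := (hf.differentiableAt (hU.mem_nhds hx)).hasDerivAt
  have hgx := (hg.differentiableAt (hU.mem_nhds hx)).hasDerivAt
  (hfx.conic α β γ δ ε η hgx).eq_zero_of_eqOn_zero_s16 hU hx hconic

theorem conic_differentiated_identity_of_differentiableAt (hU : IsOpen U) (hf : DifferentiableOn ℝ f U)
    (hg : DifferentiableOn ℝ g U) (hg' : ∀ x ∈ U, deriv g x ≠ 0)
    (hconic : ∀ x ∈ U,
      α * f x ^ 2 + β * f x * g x + γ * g x ^ 2 + δ * f x + ε * g x + η = 0)
    {x : ℝ} (hx : x ∈ U) (hφ : DifferentiableAt ℝ (fun t => deriv f t / deriv g t) x) :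
    deriv (fun t => deriv f t / deriv g t) x * (2 * α * f x + β * g x + δ) +
      2 * deriv g x *
        (α * (deriv f x / deriv g x) ^ 2 + β * (deriv f x / deriv g x) + γ) = 0 := by
  set φ := fun t => deriv f t / deriv g t
  have hreduced : EqOn (fun t => φ t * (2 * α * f t + β * g t + δ) + (β * f t + 2 * γ * g t + ε))
      0 U := fun y hy => by
    have h := deriv_conic_eq_zero hU hf hg hconic hy
    simp only [φ, Pi.zero_apply]
    field_simp [hg' y hy]
    linear_combination h
  have hfx := (hf.differentiableAt (hU.mem_nhds hx)).hasDerivAt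
  have hgx := (hg.differentiableAt (hU.mem_nhds hx)).hasDerivAt
  have hderiv := (hφ.hasDerivAt.mul
      (((hfx.const_mul (2 * α)).add (hgx.const_mul β)).add_const δ)).add
    (((hfx.const_mul β).add (hgx.const_mul (2 * γ))).add_const ε)
  have h := hderiv.eq_zero_of_eqOn_zero_s16 hU hx hreduced
  simp only [Pi.add_apply] at h
  have hf'_eq : deriv f x = φ x * deriv g x := (div_mul_cancel₀ _ (hg' x hx)).symm
  linear_combination h - (2 * α * φ x + β) * hf'_eq

end Conic

theorem conic_differentiated_identity_general
    (I : Set ℝ) (hI : IsOpen I)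
    (f g : ℝ → ℝ)
    (hf : ContDiffOn ℝ 2 f I) (hg : ContDiffOn ℝ 2 g I)
    (hg' : ∀ x ∈ I, deriv g x ≠ 0)
    (α β γ δ ε η : ℝ)
    (hconic : ∀ x ∈ I,
      α * f x ^ 2 + β * f x * g x + γ * g x ^ 2 + δ * f x + ε * g x + η = 0) :
    ∀ x ∈ I,
      deriv (fun t => deriv f t / deriv g t) x * (2 * α * f x + β * g x + δ) +
        2 * deriv g x *
          (α * (deriv f x / deriv g x) ^ 2 + β * (deriv f x / deriv g x) + γ) = 0 := by
  intro x hx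
  have hf'd := (hf.deriv_of_isOpen hI (m := 1) le_rfl).differentiableOn one_ne_zero
  have hg'd := (hg.deriv_of_isOpen hI (m := 1) le_rfl).differentiableOn one_ne_zero
  have hφ : DifferentiableAt ℝ (fun t => deriv f t / deriv g t) x :=
    ((hf'd.div hg'd hg') x hx).differentiableAt (hI.mem_nhds hx)
  exact conic_differentiated_identity_of_differentiableAt hI (hf.differentiableOn two_ne_zero)
    (hg.differentiableOn two_ne_zero) hg' hconic hx hφ

/-- Differentiated form of a quadratic relation satisfied by a 𝒞₂ pair:
`φ'·(2αf + βg + δ) + 2g'·(αφ² + βφ + γ) = 0` where `φ = f'/g'`. -/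
theorem conic_differentiated_identity
    (I : Set ℝ) (hI : IsOpen I) (hIc : I.OrdConnected) (hne : I.Nonempty)
    (f g : ℝ → ℝ)
    (hf : ContDiffOn ℝ 2 f I) (hg : ContDiffOn ℝ 2 g I)
    (hg' : ∀ x ∈ I, deriv g x ≠ 0)
    (hphi' : ∀ x ∈ I, deriv (fun t => deriv f t / deriv g t) x ≠ 0)
    (α β γ δ ε η : ℝ) (habc : (α, β, γ) ≠ (0, 0, 0))
    (hconic : ∀ x ∈ I,
      α * f x ^ 2 + β * f x * g x + γ * g x ^ 2 + δ * f x + ε * g x + η = 0) :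
    ∀ x ∈ I,
      deriv (fun t => deriv f t / deriv g t) x * (2 * α * f x + β * g x + δ) +
        2 * deriv g x *
          (α * (deriv f x / deriv g x) ^ 2 + β * (deriv f x / deriv g x) + γ) = 0 :=
  conic_differentiated_identity_general I hI f g hf hg hg' α β γ δ ε η hconic
end
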